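/- arXiv:2403.12789 — 3 statements merged into one kernel-verified Lean document; each statement's English description precedes it below -/
import Mathlib

section
/- Let θ_{00}, θ_{10}, θ_{01}, θ_{11} > 0 and let π_{00}, π_{10}, π_{01}, π_{11} ≥ 0 with π_{00}+π_{10}+π_{01}+π_{11} = 1, and let C be the corresponding four-component mixture of rotated bivariate Clayton copulas. Then the one-sided limit as ν → 0⁺ of (ν − C(1−ν,ν))/ν equals π_{10}·2^{-1/θ_{10}}; i.e., the upper-lower tail dependence coefficient of the mixture is λ_{10}(C) = π_{10}·2^{-1/θ_{10}}. -/
/-!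
Write `K θ u v = (u^{-θ} + v^{-θ} - 1)^{-1/θ}` for the Clayton copula. Using `∑ π = 1`,
`ν - C(1-ν, ν)` splits into one term per component: `π₀₀ (ν - K(1-ν, ν))`, `π₁₀ K(ν, ν)`,
`π₀₁ (2ν - 1 + K(1-ν, 1-ν))` and `π₁₁ (ν - K(ν, 1-ν))`. Factoring `ν` out of the base gives
`K(u, ν) = ν (1 + (u^{-θ} - 1) ν^θ)^{-1/θ}`, so `K(1-ν, ν)/ν → 1` and `K(ν, ν)/ν → 2^{-1/θ}`
(Clayton's lower tail dependence). The third term vanishes to first order because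
`t ↦ K(t, t)` has derivative `2` at `t = 1` (Clayton has no upper tail dependence).
-/

open Filter Set Topology

noncomputable def clayton (θ u v : ℝ) : ℝ := (u ^ (-θ) + v ^ (-θ) - 1) ^ (-1 / θ)

section

variable {θ : ℝ}

lemma clayton_comm (θ u v : ℝ) : clayton θ u v = clayton θ v u := by
  rw [clayton, clayton, add_comm (u ^ _)]

lemma clayton_eq_mul_rpow (hθ : 0 < θ) {u v : ℝ} (hu : 0 < u) (hu1 : u ≤ 1) (hv : 0 < v) :
    clayton θ u v = v * (1 + (u ^ (-θ) - 1) * v ^ θ) ^ (-1 / θ) := by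
  have hvθ : v ^ (-θ) * v ^ θ = 1 := by rw [← Real.rpow_add hv]; simp
  have hu_one : 1 ≤ u ^ (-θ) := Real.one_le_rpow_of_pos_of_le_one_of_nonpos hu hu1 (by linarith)
  have hbase : u ^ (-θ) + v ^ (-θ) - 1 = v ^ (-θ) * (1 + (u ^ (-θ) - 1) * v ^ θ) := by
    linear_combination -(u ^ (-θ) - 1) * hvθ
  rw [clayton, hbase, Real.mul_rpow (by positivity)
      (by nlinarith [Real.rpow_nonneg hv.le θ]), ← Real.rpow_mul hv.le,
    show -θ * (-1 / θ) = 1 by field_simp, Real.rpow_one]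

lemma tendsto_rpow_const_nhdsGT_zero (hθ : 0 < θ) :
    Tendsto (fun v : ℝ => v ^ θ) (𝓝[>] 0) (𝓝 0) := by
  simpa [Real.zero_rpow hθ.ne'] using
    (Real.continuousAt_rpow_const 0 θ (Or.inr hθ.le)).tendsto.mono_left nhdsWithin_le_nhds

lemma tendsto_clayton_self_div (hθ : 0 < θ) :
    Tendsto (fun v => clayton θ v v / v) (𝓝[>] 0) (𝓝 (2 ^ (-1 / θ))) := by
  have hlim : Tendsto (fun v : ℝ => (2 - v ^ θ) ^ (-1 / θ)) (𝓝[>] 0) (𝓝 (2 ^ (-1 / θ))) := by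
    simpa using (tendsto_const_nhds.sub (tendsto_rpow_const_nhdsGT_zero hθ)).rpow_const
      (Or.inl (by norm_num : (2 : ℝ) - 0 ≠ 0))
  refine hlim.congr' ?_
  filter_upwards [Ioo_mem_nhdsGT one_pos] with v ⟨hv, hv1⟩
  have hvθ : v ^ (-θ) * v ^ θ = 1 := by rw [← Real.rpow_add hv]; simp
  rw [clayton_eq_mul_rpow hθ hv hv1.le hv, mul_div_cancel_left₀ _ hv.ne']
  congr 1
  linear_combination -hvθ

lemma tendsto_clayton_one_sub_div (hθ : 0 < θ) :
    Tendsto (fun v => clayton θ (1 - v) v / v) (𝓝[>] 0) (𝓝 1) := by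
  have hu : Tendsto (fun v : ℝ => (1 - v) ^ (-θ)) (𝓝[>] 0) (𝓝 1) := by
    simpa using ((tendsto_const_nhds.sub tendsto_id).rpow_const
      (Or.inl (by norm_num : (1 : ℝ) - 0 ≠ 0))).mono_left (nhdsWithin_le_nhds (s := Ioi 0))
  have hlim : Tendsto (fun v : ℝ => (1 + ((1 - v) ^ (-θ) - 1) * v ^ θ) ^ (-1 / θ))
      (𝓝[>] 0) (𝓝 1) := by
    simpa using (tendsto_const_nhds.add ((hu.sub tendsto_const_nhds).mul
      (tendsto_rpow_const_nhdsGT_zero hθ))).rpow_const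
        (Or.inl (by norm_num : (1 : ℝ) + (1 - 1) * 0 ≠ 0))
  refine hlim.congr' ?_
  filter_upwards [Ioo_mem_nhdsGT one_pos] with v ⟨hv, hv1⟩
  rw [clayton_eq_mul_rpow hθ (by linarith) (by linarith) hv, mul_div_cancel_left₀ _ hv.ne']

lemma hasDerivAt_clayton_self_one (hθ : 0 < θ) : HasDerivAt (fun t => clayton θ t t) 2 1 := by
  have hbase : HasDerivAt (fun t : ℝ => t ^ (-θ) + t ^ (-θ) - 1) (-θ + -θ) 1 := by
    have h := Real.hasDerivAt_rpow_const (x := 1) (p := -θ) (Or.inl one_ne_zero)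
    simpa using (h.add h).sub_const 1
  have h := hbase.rpow_const (p := -1 / θ) (Or.inl (by norm_num))
  unfold clayton
  convert h using 1
  norm_num
  field_simp
  ring

lemma tendsto_clayton_upper_tail (hθ : 0 < θ) :
    Tendsto (fun v => (2 * v - 1 + clayton θ (1 - v) (1 - v)) / v) (𝓝[>] 0) (𝓝 0) := by
  have hg : HasDerivAt (fun v => clayton θ (1 - v) (1 - v)) (-2) 0 := by
    have h := (hasDerivAt_clayton_self_one hθ).comp_of_eq (0 : ℝ)
      ((hasDerivAt_id 0).const_sub 1) (by norm_num)
    norm_num at h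
    exact h
  have hd : HasDerivAt (fun v => 2 * v - 1 + clayton θ (1 - v) (1 - v)) 0 0 := by
    have h := (((hasDerivAt_id (0 : ℝ)).const_mul 2).sub_const 1).fun_add hg
    norm_num at h
    exact h
  have hval : clayton θ 1 1 = 1 := by norm_num [clayton]
  simpa [hval, div_eq_inv_mul] using hd.tendsto_slope_zero_right

end

theorem mixture_upper_lower_tail_dependence_general (θ00 θ10 θ01 θ11 : ℝ)
    (hθ00 : 0 < θ00) (hθ10 : 0 < θ10) (hθ01 : 0 < θ01) (hθ11 : 0 < θ11)
    (π00 π10 π01 π11 : ℝ)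
    (hsum : π00 + π10 + π01 + π11 = 1)
    (C : ℝ → ℝ → ℝ)
    (hC : ∀ u ∈ Ioo (0 : ℝ) 1, ∀ v ∈ Ioo (0 : ℝ) 1,
      C u v =
        π00 * ((u ^ (-θ00) + v ^ (-θ00) - 1) ^ (-1 / θ00))
        + π10 * (v - ((1 - u) ^ (-θ10) + v ^ (-θ10) - 1) ^ (-1 / θ10))
        + π01 * (u - (u ^ (-θ01) + (1 - v) ^ (-θ01) - 1) ^ (-1 / θ01))
        + π11 * (u + v - 1 + ((1 - u) ^ (-θ11) + (1 - v) ^ (-θ11) - 1) ^ (-1 / θ11))) :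
    Tendsto (fun ν : ℝ => (ν - C (1 - ν) ν) / ν)
      (nhdsWithin 0 (Ioo (0 : ℝ) 1)) (nhds (π10 * (2 : ℝ) ^ (-1 / θ10))) := by
  have hsplit : ∀ ν ∈ Ioo (0 : ℝ) 1, (ν - C (1 - ν) ν) / ν =
      π00 * (1 - clayton θ00 (1 - ν) ν / ν) + π10 * (clayton θ10 ν ν / ν)
        + π01 * ((2 * ν - 1 + clayton θ01 (1 - ν) (1 - ν)) / ν)
        + π11 * (1 - clayton θ11 (1 - ν) ν / ν) := by
    rintro ν ⟨hν, hν1⟩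
    rw [hC _ ⟨by linarith, by linarith⟩ _ ⟨hν, hν1⟩, clayton_comm θ11 (1 - ν) ν]
    simp only [clayton, sub_sub_cancel]
    field_simp
    linear_combination (-ν) * hsum
  have hlim : Tendsto (fun ν => π00 * (1 - clayton θ00 (1 - ν) ν / ν)
      + π10 * (clayton θ10 ν ν / ν) + π01 * ((2 * ν - 1 + clayton θ01 (1 - ν) (1 - ν)) / ν)
      + π11 * (1 - clayton θ11 (1 - ν) ν / ν)) (𝓝[>] 0)
      (𝓝 (π00 * (1 - 1) + π10 * 2 ^ (-1 / θ10) + π01 * 0 + π11 * (1 - 1))) :=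
    ((((tendsto_const_nhds.sub (tendsto_clayton_one_sub_div hθ00)).const_mul π00).add
      ((tendsto_clayton_self_div hθ10).const_mul π10)).add
      ((tendsto_clayton_upper_tail hθ01).const_mul π01)).add
      ((tendsto_const_nhds.sub (tendsto_clayton_one_sub_div hθ11)).const_mul π11)
  rw [show π00 * (1 - 1) + π10 * 2 ^ (-1 / θ10) + π01 * 0 + π11 * (1 - 1)
    = π10 * (2 : ℝ) ^ (-1 / θ10) by ring] at hlim
  exact (hlim.mono_left (nhdsWithin_mono _ Ioo_subset_Ioi_self)).congr'
    (eventually_nhdsWithin_of_forall fun ν hν => (hsplit ν hν).symm)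

/-- The upper-lower tail dependence coefficient of a four-component mixture of rotated bivariate Clayton copulas is `λ₁₀(C) = lim_{ν→0⁺} (ν - C(1-ν,ν))/ν = π₁₀·2^{-1/θ₁₀}`. -/
theorem mixture_upper_lower_tail_dependence (θ00 θ10 θ01 θ11 : ℝ)
    (hθ00 : 0 < θ00) (hθ10 : 0 < θ10) (hθ01 : 0 < θ01) (hθ11 : 0 < θ11)
    (π00 π10 π01 π11 : ℝ)
    (hπ00 : 0 ≤ π00) (hπ10 : 0 ≤ π10) (hπ01 : 0 ≤ π01) (hπ11 : 0 ≤ π11)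
    (hsum : π00 + π10 + π01 + π11 = 1)
    (C : ℝ → ℝ → ℝ)
    (hC : ∀ u ∈ Ioo (0 : ℝ) 1, ∀ v ∈ Ioo (0 : ℝ) 1,
      C u v =
        π00 * ((u ^ (-θ00) + v ^ (-θ00) - 1) ^ (-1 / θ00))
        + π10 * (v - ((1 - u) ^ (-θ10) + v ^ (-θ10) - 1) ^ (-1 / θ10))
        + π01 * (u - (u ^ (-θ01) + (1 - v) ^ (-θ01) - 1) ^ (-1 / θ01))
        + π11 * (u + v - 1 + ((1 - u) ^ (-θ11) + (1 - v) ^ (-θ11) - 1) ^ (-1 / θ11))) :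
    Tendsto (fun ν : ℝ => (ν - C (1 - ν) ν) / ν)
      (nhdsWithin 0 (Ioo (0 : ℝ) 1)) (nhds (π10 * (2 : ℝ) ^ (-1 / θ10))) :=
  mixture_upper_lower_tail_dependence_general θ00 θ10 θ01 θ11 hθ00 hθ10 hθ01 hθ11 π00 π10 π01 π11
    hsum C hC
end

section
/- Let θ_{00}, θ_{10}, θ_{01}, θ_{11} > 0 and let π_{00}, π_{10}, π_{01}, π_{11} ≥ 0 with π_{00}+π_{10}+π_{01}+π_{11} = 1, and let C be the corresponding four-component mixture of rotated bivariate Clayton copulas. Then the one-sided limit as ν → 0⁺ of (ν − C(ν,1−ν))/ν equals π_{01}·2^{-1/θ_{01}}; i.e., the lower-upper tail dependence coefficient of the mixture is λ_{01}(C) = π_{01}·2^{-1/θ_{01}}. -/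
open Filter Set

private lemma aux_tail (θ : ℝ) (hθ : 0 < θ) :
    Tendsto (fun ν : ℝ => (ν ^ (-θ) + (1 - ν) ^ (-θ) - 1) ^ (-1 / θ) / ν)
      (nhdsWithin 0 (Ioo (0:ℝ) 1)) (nhds 1) := by
  have hkey : ∀ ν ∈ Ioo (0:ℝ) 1,
      (ν ^ (-θ) + (1 - ν) ^ (-θ) - 1) ^ (-1 / θ) / ν
        = (1 + ν ^ θ * ((1 - ν) ^ (-θ) - 1)) ^ (-1 / θ) := by
    rintro ν ⟨h0, h1⟩
    have hν1 : (0:ℝ) < 1 - ν := by linarith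
    have hmul : ν ^ (-θ) * ν ^ θ = 1 := by
      rw [← Real.rpow_add h0]; simp
    have hb : 1 ≤ (1 - ν) ^ (-θ) := by
      rw [Real.rpow_neg hν1.le]
      have h1' : (1 - ν) ^ θ ≤ 1 := Real.rpow_le_one hν1.le (by linarith) hθ.le
      have h2 : 0 < (1 - ν) ^ θ := Real.rpow_pos_of_pos hν1 θ
      exact (one_le_inv₀ h2).mpr h1'
    have hfac : ν ^ (-θ) + (1 - ν) ^ (-θ) - 1
        = ν ^ (-θ) * (1 + ν ^ θ * ((1 - ν) ^ (-θ) - 1)) := by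
      linear_combination (1 - (1 - ν) ^ (-θ)) * hmul
    have hpos2 : 0 ≤ 1 + ν ^ θ * ((1 - ν) ^ (-θ) - 1) := by
      have := Real.rpow_nonneg h0.le θ
      nlinarith
    have hpow : (ν ^ (-θ)) ^ (-1 / θ) = ν := by
      rw [← Real.rpow_mul h0.le, show -θ * (-1 / θ) = 1 by field_simp]
      exact Real.rpow_one ν
    rw [hfac, Real.mul_rpow (Real.rpow_nonneg h0.le _) hpos2, hpow,
      mul_comm, mul_div_assoc, div_self h0.ne', mul_one]
  have t1 : Tendsto (fun ν : ℝ => ν ^ θ) (nhdsWithin 0 (Ioo (0:ℝ) 1)) (nhds 0) := by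
    have := (Real.continuousAt_rpow_const 0 θ (Or.inr hθ.le)).continuousWithinAt
      (s := Ioo (0:ℝ) 1)
    simpa [ContinuousWithinAt, Real.zero_rpow hθ.ne'] using this
  have t2 : Tendsto (fun ν : ℝ => (1 - ν) ^ (-θ)) (nhdsWithin 0 (Ioo (0:ℝ) 1)) (nhds 1) := by
    have hc : ContinuousAt (fun ν : ℝ => (1 - ν) ^ (-θ)) 0 :=
      ContinuousAt.rpow_const (by fun_prop) (Or.inl (by norm_num))
    have := hc.continuousWithinAt (s := Ioo (0:ℝ) 1)
    simpa [ContinuousWithinAt, Real.one_rpow] using this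
  have tin : Tendsto (fun ν : ℝ => 1 + ν ^ θ * ((1 - ν) ^ (-θ) - 1))
      (nhdsWithin 0 (Ioo (0:ℝ) 1)) (nhds 1) := by
    have := (t1.mul (t2.sub (tendsto_const_nhds (x := (1:ℝ))))).const_add 1
    simpa using this
  have tall := tin.rpow_const (p := -1 / θ) (Or.inl one_ne_zero)
  rw [Real.one_rpow] at tall
  exact Tendsto.congr' (eventually_mem_nhdsWithin.mono fun ν hν => (hkey ν hν).symm) tall
private lemma aux_two (θ : ℝ) (hθ : 0 < θ) :
    Tendsto (fun ν : ℝ => (ν ^ (-θ) + ν ^ (-θ) - 1) ^ (-1 / θ) / ν)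
      (nhdsWithin 0 (Ioo (0:ℝ) 1)) (nhds ((2:ℝ) ^ (-1 / θ))) := by
  have hkey : ∀ ν ∈ Ioo (0:ℝ) 1,
      (ν ^ (-θ) + ν ^ (-θ) - 1) ^ (-1 / θ) / ν = (2 - ν ^ θ) ^ (-1 / θ) := by
    rintro ν ⟨h0, h1⟩
    have hmul : ν ^ (-θ) * ν ^ θ = 1 := by
      rw [← Real.rpow_add h0]; simp
    have hle : ν ^ θ ≤ 1 := Real.rpow_le_one h0.le h1.le hθ.le
    have hfac : ν ^ (-θ) + ν ^ (-θ) - 1 = ν ^ (-θ) * (2 - ν ^ θ) := by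
      linear_combination hmul
    have hpos2 : 0 ≤ 2 - ν ^ θ := by linarith
    have hpow : (ν ^ (-θ)) ^ (-1 / θ) = ν := by
      rw [← Real.rpow_mul h0.le, show -θ * (-1 / θ) = 1 by field_simp]
      exact Real.rpow_one ν
    rw [hfac, Real.mul_rpow (Real.rpow_nonneg h0.le _) hpos2, hpow,
      mul_comm, mul_div_assoc, div_self h0.ne', mul_one]
  have t1 : Tendsto (fun ν : ℝ => ν ^ θ) (nhdsWithin 0 (Ioo (0:ℝ) 1)) (nhds 0) := by
    have := (Real.continuousAt_rpow_const 0 θ (Or.inr hθ.le)).continuousWithinAt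
      (s := Ioo (0:ℝ) 1)
    simpa [ContinuousWithinAt, Real.zero_rpow hθ.ne'] using this
  have tin : Tendsto (fun ν : ℝ => 2 - ν ^ θ) (nhdsWithin 0 (Ioo (0:ℝ) 1)) (nhds 2) := by
    have := t1.const_sub 2
    simpa using this
  have tall := tin.rpow_const (p := -1 / θ) (Or.inl two_ne_zero)
  exact Tendsto.congr' (eventually_mem_nhdsWithin.mono fun ν hν => (hkey ν hν).symm) tall

private lemma aux_der (θ : ℝ) (hθ : 0 < θ) :
    Tendsto (fun ν : ℝ => ((1 - ν) - ((1 - ν) ^ (-θ) + (1 - ν) ^ (-θ) - 1) ^ (-1 / θ)) / ν)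
      (nhdsWithin 0 (Ioo (0:ℝ) 1)) (nhds 1) := by
  set f : ℝ → ℝ := fun ν => (1 - ν) - ((1 - ν) ^ (-θ) + (1 - ν) ^ (-θ) - 1) ^ (-1 / θ) with hf
  have hd1 : HasDerivAt (fun ν : ℝ => 1 - ν) (-1) 0 := by
    simpa using (hasDerivAt_id (0:ℝ)).const_sub 1
  have hd2 : HasDerivAt (fun ν : ℝ => (1 - ν) ^ (-θ)) θ 0 := by
    have := hd1.rpow_const (p := -θ) (Or.inl (by norm_num))
    convert this using 1
    norm_num [Real.one_rpow]
  have hd3 : HasDerivAt (fun ν : ℝ => (1 - ν) ^ (-θ) + (1 - ν) ^ (-θ) - 1) (θ + θ) 0 :=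
    (hd2.add hd2).sub_const 1
  have hval : ((1:ℝ) - 0) ^ (-θ) + ((1:ℝ) - 0) ^ (-θ) - 1 = 1 := by
    norm_num [Real.one_rpow]
  have hd4 : HasDerivAt (fun ν : ℝ => ((1 - ν) ^ (-θ) + (1 - ν) ^ (-θ) - 1) ^ (-1 / θ)) (-2) 0 := by
    have := hd3.rpow_const (p := -1 / θ) (Or.inl (by rw [hval]; norm_num))
    convert this using 1
    rw [hval, Real.one_rpow]
    field_simp
    ring
  have hdf : HasDerivAt f 1 0 := by
    have := hd1.sub hd4
    norm_num at this
    exact this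
  have hslope := hasDerivAt_iff_tendsto_slope.mp hdf
  have hf0 : f 0 = 0 := by
    simp only [hf]
    rw [hval, Real.one_rpow]
    norm_num
  have heq : (fun ν : ℝ => f ν / ν) = slope f 0 := by
    funext ν
    simp [slope_def_field, hf0]
  have hsub : Ioo (0:ℝ) 1 ⊆ {(0:ℝ)}ᶜ := fun x hx => by
    simpa using hx.1.ne'
  have := hslope.mono_left (nhdsWithin_mono 0 hsub)
  rw [← heq] at this
  exact this


/-- The lower-upper tail dependence coefficient of a four-component mixture of rotated bivariate Clayton copulas is `λ₀₁(C) = lim_{ν→0⁺} (ν - C(ν,1-ν))/ν = π₀₁·2^{-1/θ₀₁}`. -/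
theorem mixture_lower_upper_tail_dependence (θ00 θ10 θ01 θ11 : ℝ)
    (hθ00 : 0 < θ00) (hθ10 : 0 < θ10) (hθ01 : 0 < θ01) (hθ11 : 0 < θ11)
    (π00 π10 π01 π11 : ℝ)
    (hπ00 : 0 ≤ π00) (hπ10 : 0 ≤ π10) (hπ01 : 0 ≤ π01) (hπ11 : 0 ≤ π11)
    (hsum : π00 + π10 + π01 + π11 = 1)
    (C : ℝ → ℝ → ℝ)
    (hC : ∀ u ∈ Ioo (0 : ℝ) 1, ∀ v ∈ Ioo (0 : ℝ) 1,
      C u v =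
        π00 * ((u ^ (-θ00) + v ^ (-θ00) - 1) ^ (-1 / θ00))
        + π10 * (v - ((1 - u) ^ (-θ10) + v ^ (-θ10) - 1) ^ (-1 / θ10))
        + π01 * (u - (u ^ (-θ01) + (1 - v) ^ (-θ01) - 1) ^ (-1 / θ01))
        + π11 * (u + v - 1 + ((1 - u) ^ (-θ11) + (1 - v) ^ (-θ11) - 1) ^ (-1 / θ11))) :
    Tendsto (fun ν : ℝ => (ν - C ν (1 - ν)) / ν)
      (nhdsWithin 0 (Ioo (0 : ℝ) 1)) (nhds (π01 * (2 : ℝ) ^ (-1 / θ01))) := by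
  have hπ : π11 = 1 - π00 - π10 - π01 := by linarith
  subst hπ
  have t00 := aux_tail θ00 hθ00
  have t10 := aux_der θ10 hθ10
  have t01 := aux_two θ01 hθ01
  have t11 : Tendsto (fun ν : ℝ => ((1 - ν) ^ (-θ11) + ν ^ (-θ11) - 1) ^ (-1 / θ11) / ν)
      (nhdsWithin 0 (Ioo (0:ℝ) 1)) (nhds 1) := by
    refine (aux_tail θ11 hθ11).congr fun ν => ?_
    rw [add_comm (ν ^ (-θ11))]
  have hG : Tendsto (fun ν : ℝ =>
      π00 * (1 - (ν ^ (-θ00) + (1 - ν) ^ (-θ00) - 1) ^ (-1 / θ00) / ν)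
      + π10 * (1 - ((1 - ν) - ((1 - ν) ^ (-θ10) + (1 - ν) ^ (-θ10) - 1) ^ (-1 / θ10)) / ν)
      + π01 * ((ν ^ (-θ01) + ν ^ (-θ01) - 1) ^ (-1 / θ01) / ν)
      + (1 - π00 - π10 - π01) * (1 - ((1 - ν) ^ (-θ11) + ν ^ (-θ11) - 1) ^ (-1 / θ11) / ν))
      (nhdsWithin 0 (Ioo (0:ℝ) 1))
      (nhds (π00 * (1 - 1) + π10 * (1 - 1) + π01 * ((2:ℝ) ^ (-1 / θ01))
        + (1 - π00 - π10 - π01) * (1 - 1))) :=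
    (((((tendsto_const_nhds (x := (1:ℝ))).sub t00).const_mul π00).add
      (((tendsto_const_nhds (x := (1:ℝ))).sub t10).const_mul π10)).add
      (t01.const_mul π01)).add
      (((tendsto_const_nhds (x := (1:ℝ))).sub t11).const_mul (1 - π00 - π10 - π01))
  rw [show π00 * (1 - 1) + π10 * (1 - 1) + π01 * ((2:ℝ) ^ (-1 / θ01))
        + (1 - π00 - π10 - π01) * (1 - 1) = π01 * (2:ℝ) ^ (-1 / θ01) by ring] at hG
  refine Tendsto.congr' ?_ hG
  filter_upwards [eventually_mem_nhdsWithin] with ν hν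
  obtain ⟨h0, h1⟩ := hν
  rw [hC ν ⟨h0, h1⟩ (1 - ν) ⟨by linarith, by linarith⟩]
  simp only [sub_sub_cancel]
  have hν0 : ν ≠ 0 := ne_of_gt h0
  field_simp
  ring
end

section
/- Let α, β > 0 and n ∈ ℕ. Consider the hierarchical model in which ω is drawn from the Beta(α, β) distribution, then, given ω, η is drawn from the binomial distribution Bin(n, ω), and finally, given η, π is drawn from the Beta(α + η, β + n − η) distribution. Then the marginal distribution of π is exactly Beta(α, β); i.e., the measure on [0,1] obtained by the composition (bind) of these three kernels equals the Beta(α, β) measure. (This is part (i) of the paper's Proposition, stating that the marginal distribution of each weight vector π_t in the dependent Dirichlet construction is invariant, specialized here to each coordinate where the Dirichlet–multinomial hierarchy reduces to a beta–binomial hierarchy.) -/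
open MeasureTheory Set

/-- The Beta(α, β) probability measure on ℝ, supported on `(0,1)`, with density
`x^(α-1) (1-x)^(β-1) / B(α,β)` with respect to Lebesgue measure, where
`B(α,β) = Γ(α)Γ(β)/Γ(α+β)`. -/
noncomputable def betaMeasure (α β : ℝ) : Measure ℝ :=
  volume.withDensity fun x =>
    ENNReal.ofReal (indicator (Ioo (0 : ℝ) 1)
      (fun x => x ^ (α - 1) * (1 - x) ^ (β - 1)
        / (Real.Gamma α * Real.Gamma β / Real.Gamma (α + β))) x)

/-- The binomial distribution with `n` trials and success probability `ω`, as a measure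
on `ℕ`: it gives mass `C(n,k) ω^k (1-ω)^(n-k)` to each `k ∈ {0,…,n}`. -/
noncomputable def binomialMeasure (n : ℕ) (ω : ℝ) : Measure ℕ :=
  ∑ k ∈ Finset.range (n + 1),
    ENNReal.ofReal ((n.choose k : ℝ) * ω ^ k * (1 - ω) ^ (n - k)) • Measure.dirac k

/-! Conjugacy of the beta and binomial laws: the Beta(α, β) density times the likelihood
`ω ^ k (1 - ω) ^ (n - k)` is `B(α + k, β + n - k) / B(α, β)` times the Beta(α + k, β + n - k)
density. Integrating in `ω` shows that `η` has the beta-binomial law with weights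
`C(n, k) B(α + k, β + n - k) / B(α, β)`; read backwards, the same identity shows that mixing the
posteriors Beta(α + k, β + n - k) with these weights gives `∑ₖ C(n, k) x ^ k (1 - x) ^ (n - k)`
times the Beta(α, β) density, which is the Beta(α, β) density by the binomial theorem. -/

open ProbabilityTheory (beta beta_pos betaPDF betaPDFReal measurable_betaPDFReal
  lintegral_betaPDF_eq_one)

lemma betaMeasure_eq_withDensity_betaPDF (a b : ℝ) :
    betaMeasure a b = volume.withDensity (betaPDF a b) := by
  unfold betaMeasure betaPDF
  congr 1
  funext x
  congr 1
  simp only [indicator, mem_Ioo, betaPDFReal, beta]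
  split_ifs <;> ring

lemma measurable_betaPDF (a b : ℝ) : Measurable (betaPDF a b) :=
  (measurable_betaPDFReal a b).ennreal_ofReal

lemma betaPDFReal_nonneg {a b : ℝ} (ha : 0 < a) (hb : 0 < b) (x : ℝ) :
    0 ≤ betaPDFReal a b x := by
  unfold betaPDFReal
  split_ifs with hx
  · have := beta_pos ha hb
    have := hx.1
    have := sub_pos.2 hx.2
    positivity
  · rfl

lemma betaPDFReal_add_nat {a b : ℝ} (ha : 0 < a) (hb : 0 < b) (k m : ℕ) (x : ℝ) :
    betaPDFReal (a + k) (b + m) x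
      = beta a b / beta (a + k) (b + m) * (x ^ k * (1 - x) ^ m * betaPDFReal a b x) := by
  have hB := (beta_pos ha hb).ne'
  unfold betaPDFReal
  split_ifs with hx
  · rw [add_sub_right_comm a, add_sub_right_comm b, Real.rpow_add_natCast hx.1.ne',
      Real.rpow_add_natCast (sub_pos.2 hx.2).ne']
    field_simp
  · simp

lemma lintegral_betaMeasure_pow_mul_one_sub_pow {a b : ℝ} (ha : 0 < a) (hb : 0 < b) (k m : ℕ) :
    ∫⁻ x, ENNReal.ofReal (x ^ k * (1 - x) ^ m) ∂betaMeasure a b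
      = ENNReal.ofReal (beta (a + k) (b + m) / beta a b) := by
  have hB := beta_pos ha hb
  have hBkm := beta_pos (by positivity : 0 < a + k) (by positivity : 0 < b + m)
  have h_tilt : ∀ x, betaPDF a b x * ENNReal.ofReal (x ^ k * (1 - x) ^ m)
      = ENNReal.ofReal (beta (a + k) (b + m) / beta a b) * betaPDF (a + k) (b + m) x := by
    intro x
    rw [betaPDF, betaPDF, ← ENNReal.ofReal_mul (betaPDFReal_nonneg ha hb x),
      ← ENNReal.ofReal_mul (by positivity), betaPDFReal_add_nat ha hb]
    congr 1
    field_simp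
  rw [betaMeasure_eq_withDensity_betaPDF,
    lintegral_withDensity_eq_lintegral_mul _ (measurable_betaPDF a b) (by fun_prop)]
  simp_rw [Pi.mul_apply, h_tilt]
  rw [lintegral_const_mul _ (measurable_betaPDF _ _),
    lintegral_betaPDF_eq_one (by positivity) (by positivity), mul_one]

lemma binomialMeasure_bind {X : Type*} [MeasurableSpace X] (n : ℕ) (ω : ℝ)
    (κ : ℕ → Measure X) :
    (binomialMeasure n ω).bind κ = ∑ k ∈ Finset.range (n + 1),
      ENNReal.ofReal ((n.choose k : ℝ) * ω ^ k * (1 - ω) ^ (n - k)) • κ k := by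
  ext s hs
  rw [Measure.bind_apply hs measurable_from_top.aemeasurable, binomialMeasure,
    lintegral_finsetSum_measure, Measure.coe_finsetSum, Finset.sum_apply]
  refine Finset.sum_congr rfl fun k _ => ?_
  rw [lintegral_smul_measure, lintegral_dirac, Measure.smul_apply, smul_eq_mul]

lemma bind_binomialMeasure_bind {X : Type*} [MeasurableSpace X] (μ : Measure ℝ) (n : ℕ)
    (κ : ℕ → Measure X) :
    μ.bind (fun ω => (binomialMeasure n ω).bind κ) = ∑ k ∈ Finset.range (n + 1),
      (∫⁻ ω, ENNReal.ofReal ((n.choose k : ℝ) * ω ^ k * (1 - ω) ^ (n - k)) ∂μ) • κ k := by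
  simp_rw [binomialMeasure_bind]
  have h_meas : Measurable fun ω : ℝ => ∑ k ∈ Finset.range (n + 1),
      ENNReal.ofReal ((n.choose k : ℝ) * ω ^ k * (1 - ω) ^ (n - k)) • κ k := by
    refine Measure.measurable_of_measurable_coe _ fun s hs => ?_
    simp only [Measure.coe_finsetSum, Finset.sum_apply, Measure.smul_apply, smul_eq_mul]
    fun_prop
  ext s hs
  simp only [Measure.bind_apply hs h_meas.aemeasurable, Measure.coe_finsetSum, Finset.sum_apply,
    Measure.smul_apply, smul_eq_mul]
  rw [lintegral_finsetSum _ fun k _ => by fun_prop]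
  exact Finset.sum_congr rfl fun k _ => lintegral_mul_const _ (by fun_prop)

noncomputable def betaBinomialPMFReal (a b : ℝ) (n k : ℕ) : ℝ :=
  n.choose k * (beta (a + k) (b + (n - k : ℕ)) / beta a b)

lemma betaBinomialPMFReal_nonneg {a b : ℝ} (ha : 0 < a) (hb : 0 < b) (n k : ℕ) :
    0 ≤ betaBinomialPMFReal a b n k := by
  have := beta_pos ha hb
  have := beta_pos (by positivity : 0 < a + k) (by positivity : 0 < b + (n - k : ℕ))
  unfold betaBinomialPMFReal
  positivity

lemma lintegral_binomial_betaMeasure {a b : ℝ} (ha : 0 < a) (hb : 0 < b) (n k : ℕ) :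
    ∫⁻ ω, ENNReal.ofReal ((n.choose k : ℝ) * ω ^ k * (1 - ω) ^ (n - k)) ∂betaMeasure a b
      = ENNReal.ofReal (betaBinomialPMFReal a b n k) := by
  simp_rw [mul_assoc, ENNReal.ofReal_mul (Nat.cast_nonneg _)]
  rw [lintegral_const_mul' _ _ ENNReal.ofReal_ne_top,
    lintegral_betaMeasure_pow_mul_one_sub_pow ha hb, betaBinomialPMFReal,
    ENNReal.ofReal_mul (Nat.cast_nonneg _)]

lemma sum_betaBinomialPMFReal_mul_betaPDFReal {a b : ℝ} (ha : 0 < a) (hb : 0 < b) (n : ℕ)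
    (x : ℝ) :
    ∑ k ∈ Finset.range (n + 1),
      betaBinomialPMFReal a b n k * betaPDFReal (a + k) (b + (n - k : ℕ)) x
      = betaPDFReal a b x := by
  have hB := (beta_pos ha hb).ne'
  have h_term : ∀ k, betaBinomialPMFReal a b n k * betaPDFReal (a + k) (b + (n - k : ℕ)) x
      = x ^ k * (1 - x) ^ (n - k) * n.choose k * betaPDFReal a b x := fun k => by
    have := (beta_pos (by positivity : 0 < a + k) (by positivity : 0 < b + (n - k : ℕ))).ne'
    rw [betaBinomialPMFReal, betaPDFReal_add_nat ha hb]
    field_simp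
  simp_rw [h_term, ← Finset.sum_mul, ← add_pow, add_sub_cancel, one_pow, one_mul]

lemma sum_betaBinomial_smul_betaMeasure {a b : ℝ} (ha : 0 < a) (hb : 0 < b) (n : ℕ) :
    ∑ k ∈ Finset.range (n + 1),
      ENNReal.ofReal (betaBinomialPMFReal a b n k) • betaMeasure (a + k) (b + (n - k : ℕ))
      = betaMeasure a b := by
  ext s hs
  simp only [betaMeasure_eq_withDensity_betaPDF, Measure.coe_finsetSum, Finset.sum_apply,
    Measure.smul_apply, smul_eq_mul, withDensity_apply _ hs]
  simp_rw [← lintegral_const_mul _ (measurable_betaPDF _ _)]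
  rw [← lintegral_finsetSum _ fun k _ => (measurable_betaPDF _ _).const_mul _]
  refine lintegral_congr fun x => ?_
  simp_rw [betaPDF, ← ENNReal.ofReal_mul (betaBinomialPMFReal_nonneg ha hb n _)]
  rw [← ENNReal.ofReal_sum_of_nonneg fun k _ =>
      mul_nonneg (betaBinomialPMFReal_nonneg ha hb n k)
        (betaPDFReal_nonneg (by positivity) (by positivity) x),
    sum_betaBinomialPMFReal_mul_betaPDFReal ha hb]

/-- Beta–binomial conjugacy, marginal invariance: if `ω ~ Beta(α,β)`, then `η | ω ~ Bin(n,ω)`,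
and finally `π | η ~ Beta(α+η, β+n-η)`, the marginal distribution of `π` is exactly
`Beta(α,β)`. -/
theorem beta_binomial_marginal_invariance (α β : ℝ) (hα : 0 < α) (hβ : 0 < β) (n : ℕ) :
    (betaMeasure α β).bind (fun ω =>
      (binomialMeasure n ω).bind (fun η =>
        betaMeasure (α + η) (β + ((n : ℝ) - η)))) = betaMeasure α β := by
  rw [bind_binomialMeasure_bind]
  calc _ = ∑ k ∈ Finset.range (n + 1),
        ENNReal.ofReal (betaBinomialPMFReal α β n k) • betaMeasure (α + k) (β + (n - k : ℕ)) :=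
        Finset.sum_congr rfl fun k hk => by
          rw [lintegral_binomial_betaMeasure hα hβ,
            Nat.cast_sub (Finset.mem_range_succ_iff.1 hk)]
    _ = betaMeasure α β := sum_betaBinomial_smul_betaMeasure hα hβ n
end
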